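/- arXiv:1806.08474 — 2 statements merged into one kernel-verified Lean document; each statement's English description precedes it below -/
import Mathlib

section
/- For every positive real constant d and every complex number z, the normalized sum of Gaussian shifts on the grid πℤ equals the third Jacobi theta function: (1/√(πd)) · Σ_{n∈ℤ} exp(−(z − nπ)²/(dπ²)) = ϑ₃(z, iπd). -/
/-!
Poisson summation applied to the Gaussian `x ↦ exp(-π² a x² + 2 i x z)`, whose Fourier transform
is again a Gaussian (`Complex.tsum_exp_neg_quadratic`), turns the theta series
`Σ exp(2inz - π² a n²) = ϑ₃(z, iπa)` into the sum of the Gaussian shifts `exp(-(z - nπ)²/(aπ²))`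
weighted by `(πa)^(-1/2)`.
-/

/-- The third Jacobi theta function `ϑ₃(z, τ) = Σ_{n ∈ ℤ} exp(2inz + πin²τ)`. -/
noncomputable def jacobiTheta3 (z τ : ℂ) : ℂ :=
  ∑' n : ℤ, Complex.exp (2 * Complex.I * n * z + Real.pi * Complex.I * n ^ 2 * τ)

open Complex Real

theorem jacobiTheta3_I_mul_pi_mul {a : ℂ} (ha : 0 < a.re) (z : ℂ) :
    jacobiTheta3 z (I * π * a) =
      1 / (π * a) ^ (1 / 2 : ℂ) * ∑' n : ℤ, cexp (-(z - n * π) ^ 2 / (a * π ^ 2)) := by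
  have hπ : (π : ℂ) ≠ 0 := ofReal_ne_zero.mpr pi_ne_zero
  have ha0 : a ≠ 0 := fun h ↦ by simp [h] at ha
  have hπa : 0 < ((π : ℂ) * a).re := by simpa [re_ofReal_mul] using mul_pos pi_pos ha
  have theta_term (n : ℤ) : 2 * I * n * z + π * I * n ^ 2 * (I * π * a) =
      -π * (π * a) * n ^ 2 + 2 * π * (I * z / π) * n := by
    field_simp
    linear_combination (π ^ 2 * a * n ^ 2) * (I_sq : I ^ 2 = -1)
  have shift_term (n : ℤ) : -π / (π * a) * (n + I * (I * z / π)) ^ 2 =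
      -(z - n * π) ^ 2 / (a * π ^ 2) := by
    field_simp
    linear_combination (z ^ 2 * (1 - I ^ 2) - 2 * π * n * z) * (I_sq : I ^ 2 = -1)
  simp only [jacobiTheta3, theta_term, ← shift_term]
  exact tsum_exp_neg_quadratic hπa (I * z / π)

/-- For every `d > 0` and every complex `z`,
`(1/√(πd)) · Σ_{n∈ℤ} exp(−(z − nπ)²/(dπ²)) = ϑ₃(z, iπd)`. -/
theorem gaussian_shift_sum_eq_theta3 (d : ℝ) (hd : 0 < d) (z : ℂ) :
    (1 / Real.sqrt (Real.pi * d) : ℂ) *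
      ∑' n : ℤ, Complex.exp (-(z - n * Real.pi) ^ 2 / (d * Real.pi ^ 2)) =
    jacobiTheta3 z (Complex.I * Real.pi * d) := by
  have hsqrt : ((π * d : ℝ) : ℂ) ^ (1 / 2 : ℂ) = (√(π * d) : ℂ) := by
    rw [sqrt_eq_rpow, ofReal_cpow (by positivity)]
    norm_num
  rw [jacobiTheta3_I_mul_pi_mul (by simpa using hd), ← ofReal_mul, hsqrt]
end

section
/- For every positive real constant d and every real number x, the deviation of the third Jacobi theta function from 1 satisfies |ϑ₃(πx, iπd) − 1| < csch(π²d), where csch denotes the hyperbolic cosecant. -/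
/-- The hyperbolic cosecant `csch(a) = 2/(e^a − e^{−a})`. -/
noncomputable def csch (a : ℝ) : ℝ := 2 / (Real.exp a - Real.exp (-a))

/-!
For real `x` every term of `ϑ₃(πx, iπd)` has modulus `e^{-a n²}` with `a = π²d`, so
`|ϑ₃ - 1| ≤ 2 ∑_{n ≥ 1} e^{-a n²}`. Since `n² ≥ 2n - 1`, with equality only at `n = 1`, this is
strictly below the geometric series `2 ∑_{n ≥ 1} e^{-a(2n-1)} = 2e^{-a} / (1 - e^{-2a}) = csch a`.
-/

open Real

lemma jacobiTheta3_pi_mul (z τ : ℂ) : jacobiTheta3 (π * z) τ = jacobiTheta₂ z τ :=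
  tsum_congr fun n ↦ by rw [jacobiTheta₂_term]; ring_nf

lemma norm_jacobiTheta₂_term_ofReal (n : ℤ) (x : ℝ) (τ : ℂ) :
    ‖jacobiTheta₂_term n x τ‖ = rexp (-(π * τ.im) * n ^ 2) := by
  rw [norm_jacobiTheta₂_term, Complex.ofReal_im]
  ring_nf

lemma norm_tsum_sub_le {ι E : Type*} [NormedAddCommGroup E] [CompleteSpace E] {f : ι → E}
    (hf : Summable (‖f ·‖)) (i : ι) : ‖∑' j, f j - f i‖ ≤ ∑' j, ‖f j‖ - ‖f i‖ := by
  classical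
  rw [hf.of_norm.tsum_eq_add_tsum_ite i, hf.tsum_eq_add_tsum_ite i, add_sub_cancel_left,
    add_sub_cancel_left]
  have hnorm (j : ι) : ‖if j = i then 0 else f j‖ = if j = i then 0 else ‖f j‖ := by
    split_ifs <;> simp
  refine (norm_tsum_le_tsum_norm ?_).trans_eq (tsum_congr hnorm)
  exact hf.of_nonneg_of_le (fun _ ↦ norm_nonneg _) fun j ↦
    (hnorm j).trans_le (by split_ifs <;> simp)

lemma hasSum_exp_neg_mul_two_mul_add_one {a : ℝ} (ha : 0 < a) :
    HasSum (fun n : ℕ ↦ rexp (-a * (2 * n + 1))) (csch a / 2) := by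
  have hq : rexp (-(2 * a)) < 1 := exp_lt_one_iff.2 (by linarith)
  have hterm (n : ℕ) : rexp (-a * (2 * n + 1)) = rexp (-a) * rexp (-(2 * a)) ^ n := by
    rw [← exp_nat_mul, ← exp_add]
    ring_nf
  have hsum : csch a / 2 = rexp (-a) * (1 - rexp (-(2 * a)))⁻¹ := by
    rw [csch, exp_neg, exp_neg, two_mul, exp_add]
    field_simp
  simp_rw [hterm, hsum]
  exact (hasSum_geometric_of_lt_one (exp_nonneg _) hq).mul_left _

lemma tsum_exp_neg_mul_add_one_sq_lt {a : ℝ} (ha : 0 < a) :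
    ∑' n : ℕ, rexp (-a * (n + 1) ^ 2) < csch a / 2 := by
  have hgeom := hasSum_exp_neg_mul_two_mul_add_one ha
  have hle (n : ℕ) : rexp (-a * (n + 1) ^ 2) ≤ rexp (-a * (2 * n + 1)) :=
    exp_le_exp.2 (by nlinarith [sq_nonneg (n : ℝ)])
  rw [← hgeom.tsum_eq]
  refine Summable.tsum_lt_tsum (i := 1) hle (exp_lt_exp.2 (by norm_num; linarith)) ?_
    hgeom.summable
  exact .of_nonneg_of_le (fun _ ↦ (exp_pos _).le) hle hgeom.summable

lemma norm_jacobiTheta₂_ofReal_sub_one_le (x : ℝ) {τ : ℂ} (hτ : 0 < τ.im) :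
    ‖jacobiTheta₂ x τ - 1‖ ≤ 2 * ∑' n : ℕ, rexp (-(π * τ.im) * (n + 1) ^ 2) := by
  set g : ℤ → ℝ := fun n ↦ rexp (-(π * τ.im) * n ^ 2)
  have hnorm (n : ℤ) : ‖jacobiTheta₂_term n x τ‖ = g n := norm_jacobiTheta₂_term_ofReal n x τ
  have hsummable := summable_norm_iff.2 ((summable_jacobiTheta₂_term_iff x τ).2 hτ)
  calc ‖jacobiTheta₂ x τ - 1‖
      = ‖∑' n, jacobiTheta₂_term n x τ - jacobiTheta₂_term 0 x τ‖ := by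
        simp [jacobiTheta₂, jacobiTheta₂_term]
    _ ≤ ∑' n, g n - g 0 := by
        simpa only [hnorm] using norm_tsum_sub_le hsummable 0
    _ = 2 * ∑' n : ℕ, rexp (-(π * τ.im) * (n + 1) ^ 2) := by
        rw [tsum_int_eq_zero_add_two_mul_tsum_pnat (fun n ↦ by simp [g]) (hsummable.congr hnorm),
          tsum_pnat_eq_tsum_succ (f := fun n : ℕ ↦ g n)]
        simp [g]

/-- For every `d > 0` and every real `x`, `|ϑ₃(πx, iπd) − 1| < csch(π²d)`. -/
theorem theta3_sub_one_abs_lt_csch (d : ℝ) (hd : 0 < d) (x : ℝ) :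
    ‖jacobiTheta3 (Real.pi * x) (Complex.I * Real.pi * d) - 1‖ <
      csch (Real.pi ^ 2 * d) := by
  have him : (Complex.I * π * d).im = π * d := by simp
  have hτ : 0 < (Complex.I * π * d).im := him ▸ by positivity
  calc _ ≤ 2 * ∑' n : ℕ, rexp (-(π ^ 2 * d) * (n + 1) ^ 2) := by
        rw [jacobiTheta3_pi_mul, show π ^ 2 * d = π * (Complex.I * π * d).im by rw [him]; ring]
        exact norm_jacobiTheta₂_ofReal_sub_one_le x hτ
    _ < csch (π ^ 2 * d) := by
        linarith [tsum_exp_neg_mul_add_one_sq_lt (show 0 < π ^ 2 * d by positivity)]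
end
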